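/- Let X be a smooth projective curve over a discretely valued field with a regular semistable model whose special fiber has weighted dual graph Γ. Then for all non-negative integers r, d: dim W_d^r(X) ≤ w_d^r(Γ). -/

import Mathlib

open scoped Classical NNReal
open Filter Topology

universe u

/-- An abstract compact metric graph, together with its theory of piecewise linear
functions with integer slopes and the associated principal divisors, relative to
subcurves (`PLOn A f` / `principalOn A f` refer to the theory within the subcurve `A`). -/
structure MetricGraph where
  X : Type u
  [ms : MetricSpace X]
  [cpt : CompactSpace X]
  [conn : ConnectedSpace X]
  /-- `PLOn A f` : `f` is piecewise linear with integer slopes on the subcurve `A`. -/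
  PLOn : Set X → (X → ℝ) → Prop
  /-- the divisor `div f` of a piecewise linear function, computed within `A`
  (the value at `p` is the sum of the incoming slopes of `f` at `p`). -/
  principalOn : Set X → (X → ℝ) → (X →₀ ℤ)

attribute [instance] MetricGraph.ms MetricGraph.cpt MetricGraph.conn

namespace MetricGraph

variable (Γ : MetricGraph)

/-- A divisor: a finitely supported `ℤ`-valued function on the curve. -/
abbrev Divisor : Type u := Γ.X →₀ ℤ

/-- Degree of a divisor: the sum of its coefficients. -/
noncomputable def deg (D : Γ.Divisor) : ℤ := D.sum fun _ n => n

/-- A divisor is effective if all its coefficients are non-negative. -/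
def Effective (D : Γ.Divisor) : Prop := ∀ x, 0 ≤ D x

/-- Restriction `D|_A` of a divisor to a subset. -/
noncomputable def restrictTo (A : Set Γ.X) (D : Γ.Divisor) : Γ.Divisor :=
  D.filter fun x => x ∈ A

/-- Degree of the restriction of a divisor to a subset. -/
noncomputable def degOn (A : Set Γ.X) (D : Γ.Divisor) : ℤ := Γ.deg (Γ.restrictTo A D)

/-- Piecewise linear (rational) functions on the whole curve. -/
def PL (f : Γ.X → ℝ) : Prop := Γ.PLOn Set.univ f

/-- The principal divisor `div f` of a rational function. -/
noncomputable def principal (f : Γ.X → ℝ) : Γ.Divisor := Γ.principalOn Set.univ f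

/-- Linear equivalence of divisors within the subcurve `A`. -/
def LinEquivOn (A : Set Γ.X) (D E : Γ.Divisor) : Prop :=
  ∃ f, Γ.PLOn A f ∧ D - E = Γ.principalOn A f

/-- Linear equivalence of divisors on the curve. -/
def LinEquiv (D E : Γ.Divisor) : Prop := Γ.LinEquivOn Set.univ D E

/-- `D` has rank at least `r` as a divisor on the subcurve `A`. -/
def RankGeOn (A : Set Γ.X) (D : Γ.Divisor) (r : ℤ) : Prop :=
  ∀ E : Γ.Divisor, Γ.Effective E → ↑E.support ⊆ A → Γ.deg E ≤ r →
    ∃ D', Γ.Effective D' ∧ Γ.LinEquivOn A (D - E) D'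

/-- `D` has rank at least `r`. -/
def RankGe (D : Γ.Divisor) (r : ℤ) : Prop := Γ.RankGeOn Set.univ D r

/-- The rank of a divisor on the subcurve `A`. -/
noncomputable def rankOn (A : Set Γ.X) (D : Γ.Divisor) : ℤ :=
  sSup {r : ℤ | Γ.RankGeOn A D r}

/-- The (Baker–Norine) rank of a divisor. -/
noncomputable def rank (D : Γ.Divisor) : ℤ := Γ.rankOn Set.univ D

/-- The `A`-rank is at least `r`: only effective test divisors supported on `A` are used. -/
def ARankGe (A : Set Γ.X) (D : Γ.Divisor) (r : ℤ) : Prop :=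
  ∀ E : Γ.Divisor, Γ.Effective E → ↑E.support ⊆ A → Γ.deg E ≤ r →
    ∃ D', Γ.Effective D' ∧ Γ.LinEquiv (D - E) D'

/-- `A` is a rank determining set. -/
def RankDetermining (A : Set Γ.X) : Prop :=
  ∀ (D : Γ.Divisor) (r : ℤ), Γ.RankGe D r ↔ Γ.ARankGe A D r

/-- The group of divisor classes (divisors modulo linear equivalence). -/
def PicCl : Type u := Quot Γ.LinEquiv

/-- The class of a divisor in `PicCl`. -/
def toPic (D : Γ.Divisor) : Γ.PicCl := Quot.mk _ D

end MetricGraph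

/-- A subcurve of a metric graph: a compact connected subset, recorded together with
its genus (first Betti number). -/
structure Subcurve (Γ : MetricGraph) where
  carrier : Set Γ.X
  compact : IsCompact carrier
  connected : IsConnected carrier
  genus : ℕ

/-- `N` (strongly) deformation retracts onto `A`. -/
def DeformationRetractOnto {X : Type*} [TopologicalSpace X] (N A : Set X) : Prop :=
  A ⊆ N ∧ ∃ F : ℝ → X → X, Continuous (fun p : ℝ × X => F p.1 p.2) ∧
    (∀ x ∈ N, F 0 x = x) ∧ (∀ x ∈ N, F 1 x ∈ A) ∧
    (∀ t ∈ Set.Icc (0:ℝ) 1, ∀ x ∈ A, F t x = x) ∧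
    (∀ t ∈ Set.Icc (0:ℝ) 1, ∀ x ∈ N, F t x ∈ N)

/-- A (weighted) tropical curve: a metric graph together with a finitely supported
weight function. -/
structure TropicalCurve extends MetricGraph where
  w : X →₀ ℕ

namespace TropicalCurve

variable (Γ : TropicalCurve)

/-- The weight divisor `W = Σ w(v)·v`. -/
noncomputable def wDiv : Γ.toMetricGraph.Divisor := Finsupp.mapRange (fun n : ℕ => (n : ℤ)) rfl Γ.w

/-- For `E = Σ bᵢ vᵢ`, the divisor `E* = Σ (bᵢ + min{bᵢ, w(vᵢ)}) vᵢ`. -/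
noncomputable def star (E : Γ.toMetricGraph.Divisor) : Γ.toMetricGraph.Divisor :=
  Finsupp.zipWith (fun a b => a + min a b) (by simp) E Γ.wDiv

/-- The weighted (Amini–Baker) rank of a divisor within the subcurve `A`:
`r(D) = min_{0 ≤ F ≤ W} (deg F + r_{Γ⁰}(D - 2F))`. -/
noncomputable def wrankOn (A : Set Γ.X) (D : Γ.toMetricGraph.Divisor) : ℤ :=
  sInf {m : ℤ | ∃ F : Γ.toMetricGraph.Divisor, Γ.toMetricGraph.Effective F ∧
    F ≤ Γ.toMetricGraph.restrictTo A Γ.wDiv ∧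
    m = Γ.toMetricGraph.deg F + Γ.toMetricGraph.rankOn A (D - 2 • F)}

/-- The weighted (Amini–Baker) rank of a divisor on a tropical curve. -/
noncomputable def wrank (D : Γ.toMetricGraph.Divisor) : ℤ := Γ.wrankOn Set.univ D

/-- `w_d^r(Γ) ≥ ρ`: every effective divisor of degree (at most) `r + ρ` is contained in an
effective divisor of degree `d` and (weighted) rank at least `r`. -/
def BNGe (d r ρ : ℤ) : Prop :=
  ∀ E : Γ.toMetricGraph.Divisor, Γ.toMetricGraph.Effective E →
    Γ.toMetricGraph.deg E ≤ r + ρ →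
      ∃ D, Γ.toMetricGraph.Effective D ∧ Γ.toMetricGraph.deg D = d ∧ E ≤ D ∧ r ≤ Γ.wrank D

/-- The Brill–Noether rank `w_d^r(Γ)` of a tropical curve. -/
noncomputable def wBNrank (d r : ℤ) : ℤ := sSup {ρ : ℤ | Γ.BNGe d r ρ}

end TropicalCurve

/-! ## Statement 15: Brill–Noether rank specialization (`dim W_d^r(X) ≤ w_d^r(Γ)`).

The algebraic side (a smooth projective curve `X` over a discretely valued field with
a regular semistable model whose special fiber has weighted dual graph `Γ`) enters only
through the black boxes of the proof, which are taken as hypotheses: the degree- and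
effectivity-preserving specialization map `τ` with `r_X(D) ≤ r_Γ(τ(D))`, the property of
`ρ = dim W_d^r(X)` from [LPP, Prop. 5.1], surjectivity of specialization onto rational
effective divisors, density of rational divisors, and closedness of `W_d^r(Γ)`. -/

/-- The effective divisor `Σ δ_{v i}` attached to a tuple of points. -/
noncomputable def tupleDiv (Γ : TropicalCurve) (m : ℕ) (v : Fin m → Γ.X) :
    Γ.toMetricGraph.Divisor :=
  ∑ i, Finsupp.single (v i) (1 : ℤ)

/-!
A rational effective divisor `E` of degree `r + ρ` on `Γ` lifts to an effective divisor on `X`,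
which by (ii) lies under an effective divisor of degree `d` and rank at least `r`; its
specialization contains `E`, has degree `d` and, by the weighted specialization lemma, weighted
rank at least `r`. Density of rational divisors and closedness of `W_d^r(Γ)` extend this to every
effective divisor of degree `r + ρ`, and adding points handles those of smaller degree.
-/

namespace MetricGraph

variable {Γ : MetricGraph}

theorem effective_iff_nonneg {D : Γ.Divisor} : Γ.Effective D ↔ 0 ≤ D := by
  rw [Finsupp.le_def]; rfl

theorem deg_add (D E : Γ.Divisor) : Γ.deg (D + E) = Γ.deg D + Γ.deg E :=
  Finsupp.sum_add_index' (fun _ => rfl) fun _ _ _ => rfl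

theorem deg_single (x : Γ.X) (n : ℤ) : Γ.deg (Finsupp.single x n) = n :=
  Finsupp.sum_single_index rfl

theorem deg_nonneg {D : Γ.Divisor} (hD : Γ.Effective D) : 0 ≤ Γ.deg D :=
  Finset.sum_nonneg fun x _ => hD x

theorem deg_mono {D E : Γ.Divisor} (h : D ≤ E) : Γ.deg D ≤ Γ.deg E := by
  have hdiff : Γ.Effective (E - D) := effective_iff_nonneg.mpr (sub_nonneg.mpr h)
  calc Γ.deg D ≤ Γ.deg D + Γ.deg (E - D) := le_add_of_nonneg_right (deg_nonneg hdiff)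
    _ = Γ.deg E := by rw [← deg_add, add_sub_cancel]

theorem exists_effective_ge_deg_eq {E : Γ.Divisor} (hE : Γ.Effective E) {n : ℤ}
    (hn : Γ.deg E ≤ n) : ∃ E', Γ.Effective E' ∧ E ≤ E' ∧ Γ.deg E' = n := by
  obtain ⟨x₀⟩ : Nonempty Γ.X := inferInstance
  have hpad : 0 ≤ Finsupp.single x₀ (n - Γ.deg E) := Finsupp.single_nonneg.mpr (by omega)
  refine ⟨E + Finsupp.single x₀ (n - Γ.deg E), ?_, le_add_of_nonneg_right hpad, ?_⟩
  · exact effective_iff_nonneg.mpr (add_nonneg (effective_iff_nonneg.mp hE) hpad)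
  · rw [deg_add, deg_single, add_sub_cancel]

end MetricGraph

open MetricGraph

theorem deg_tupleDiv (Γ : TropicalCurve) (m : ℕ) (v : Fin m → Γ.X) :
    Γ.toMetricGraph.deg (tupleDiv Γ m v) = m := by
  rw [tupleDiv, MetricGraph.deg, ← Finsupp.sum_finsetSum_index (fun _ => rfl) fun _ _ _ => rfl]
  simp

theorem effective_tupleDiv (Γ : TropicalCurve) (m : ℕ) (v : Fin m → Γ.X) :
    Γ.toMetricGraph.Effective (tupleDiv Γ m v) :=
  effective_iff_nonneg.mpr <| Finset.sum_nonneg fun _ _ => Finsupp.single_nonneg.mpr zero_le_one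

namespace TropicalCurve

variable {Γ : TropicalCurve} {d r ρ : ℤ}

/-- `E` lies under a point of `W_d^r(Γ)`. -/
def HasBNExtension (d r : ℤ) (E : Γ.toMetricGraph.Divisor) : Prop :=
  ∃ D, Γ.toMetricGraph.Effective D ∧ Γ.toMetricGraph.deg D = d ∧ E ≤ D ∧ r ≤ Γ.wrank D

theorem HasBNExtension.mono {E E' : Γ.toMetricGraph.Divisor} (hE : E ≤ E')
    (h : HasBNExtension d r E') : HasBNExtension d r E :=
  let ⟨D, hD, hdeg, hle, hrk⟩ := h
  ⟨D, hD, hdeg, hE.trans hle, hrk⟩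

theorem HasBNExtension.deg_le {E : Γ.toMetricGraph.Divisor} (h : HasBNExtension d r E) :
    Γ.toMetricGraph.deg E ≤ d :=
  let ⟨_, _, hdeg, hle, _⟩ := h
  hdeg ▸ deg_mono hle

theorem BNGe.add_le_max (h : Γ.BNGe d r ρ) : r + ρ ≤ max d 0 := by
  rcases lt_or_ge (r + ρ) 0 with hneg | hnonneg
  · exact hneg.le.trans (le_max_right d 0)
  obtain ⟨E, hE, -, hdeg⟩ := exists_effective_ge_deg_eq (effective_iff_nonneg.mpr le_rfl)
    (show Γ.toMetricGraph.deg 0 ≤ r + ρ from hnonneg)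
  exact hdeg ▸ (HasBNExtension.deg_le (h E hE hdeg.le)).trans (le_max_left d 0)

theorem bddAbove_setOf_BNGe (d r : ℤ) : BddAbove {ρ | Γ.BNGe d r ρ} :=
  ⟨max d 0 - r, fun ρ h => by have := BNGe.add_le_max h; omega⟩

theorem BNGe.of_forall_deg_eq
    (h : ∀ E, Γ.toMetricGraph.Effective E → Γ.toMetricGraph.deg E = r + ρ →
      HasBNExtension d r E) :
    Γ.BNGe d r ρ := fun _ hE hdeg =>
  let ⟨E', hE', hle, hdeg'⟩ := exists_effective_ge_deg_eq hE hdeg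
  (h E' hE' hdeg').mono hle

end TropicalCurve

open TropicalCurve

theorem specialization_BN_rank_general (Γ : TropicalCurve)
    -- the divisor theory of the algebraic curve `X`
    (DivX : Type) (degX : DivX → ℤ) (rkX : DivX → ℤ) (EffX : DivX → Prop)
    (leX : DivX → DivX → Prop)
    -- (i)  the specialization map and the weighted Specialization Lemma
    (τ : DivX → Γ.toMetricGraph.Divisor)
    (hτdeg : ∀ D, Γ.toMetricGraph.deg (τ D) = degX D)
    (hτrk : ∀ D, rkX D ≤ Γ.wrank (τ D))
    (hτeff : ∀ D, EffX D → Γ.toMetricGraph.Effective (τ D))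
    (hτle : ∀ D E, leX D E → τ D ≤ τ E)
    (d r ρ : ℤ)
    -- (ii) `ρ = dim W_d^r(X)`: every effective divisor of degree `r + ρ` on `X` is
    -- contained in an effective divisor of degree `d` and rank at least `r`
    (hdim : ∀ E, EffX E → degX E = r + ρ →
      ∃ D, EffX D ∧ degX D = d ∧ leX E D ∧ r ≤ rkX D)
    -- (iii) every rational effective divisor on `Γ` is a specialization
    (RatDiv : Set Γ.toMetricGraph.Divisor)
    (hspec : ∀ E ∈ RatDiv, Γ.toMetricGraph.Effective E →
      ∃ EX, EffX EX ∧ τ EX = E)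
    -- (iv) rational divisors are dense among effective divisors of a fixed degree …
    (hdense : ∀ (m : ℕ) (v : Fin m → Γ.X), ∃ vk : ℕ → Fin m → Γ.X,
      (∀ j, tupleDiv Γ m (vk j) ∈ RatDiv) ∧
      ∀ i, Filter.Tendsto (fun j => vk j i) Filter.atTop (nhds (v i)))
    -- … `Pic_d(Γ)` is compact and `W_d^r(Γ)` is closed: limits of effective divisors of
    -- degree `d` and rank at least `r` containing `E_i → E` contain `E` and have rank ≥ r
    (hclosed : ∀ (m : ℕ) (vk : ℕ → Fin m → Γ.X) (v : Fin m → Γ.X),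
      (∀ i, Filter.Tendsto (fun j => vk j i) Filter.atTop (nhds (v i))) →
      (∀ j, ∃ D, Γ.toMetricGraph.Effective D ∧ Γ.toMetricGraph.deg D = d ∧
        tupleDiv Γ m (vk j) ≤ D ∧ r ≤ Γ.wrank D) →
      ∃ D, Γ.toMetricGraph.Effective D ∧ Γ.toMetricGraph.deg D = d ∧
        tupleDiv Γ m v ≤ D ∧ r ≤ Γ.wrank D)
    -- every effective divisor is given by a tuple of points
    (htuple : ∀ E : Γ.toMetricGraph.Divisor, Γ.toMetricGraph.Effective E →
      ∃ (m : ℕ) (v : Fin m → Γ.X), E = tupleDiv Γ m v) :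
    ρ ≤ Γ.wBNrank d r := by
  have hrational : ∀ E ∈ RatDiv, Γ.toMetricGraph.Effective E →
      Γ.toMetricGraph.deg E = r + ρ → HasBNExtension d r E := by
    intro E hRat hE hdeg
    obtain ⟨EX, hEX, rfl⟩ := hspec E hRat hE
    obtain ⟨DX, hDX, hdegDX, hle, hrk⟩ := hdim EX hEX (hτdeg EX ▸ hdeg)
    exact ⟨τ DX, hτeff DX hDX, (hτdeg DX).trans hdegDX, hτle EX DX hle, hrk.trans (hτrk DX)⟩
  refine le_csSup (bddAbove_setOf_BNGe d r) (BNGe.of_forall_deg_eq fun E hE hdeg => ?_)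
  obtain ⟨m, v, rfl⟩ := htuple E hE
  obtain ⟨vk, hvkRat, hvk⟩ := hdense m v
  refine hclosed m vk v hvk fun j => hrational _ (hvkRat j) (effective_tupleDiv Γ m (vk j)) ?_
  rwa [deg_tupleDiv] at hdeg ⊢

theorem specialization_BN_rank (Γ : TropicalCurve)
    -- the divisor theory of the algebraic curve `X`
    (DivX : Type) (degX : DivX → ℤ) (rkX : DivX → ℤ) (EffX : DivX → Prop)
    (leX : DivX → DivX → Prop)
    -- (i)  the specialization map and the weighted Specialization Lemma
    (τ : DivX → Γ.toMetricGraph.Divisor)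
    (hτdeg : ∀ D, Γ.toMetricGraph.deg (τ D) = degX D)
    (hτrk : ∀ D, rkX D ≤ Γ.wrank (τ D))
    (hτeff : ∀ D, EffX D → Γ.toMetricGraph.Effective (τ D))
    (hτle : ∀ D E, leX D E → τ D ≤ τ E)
    (d r ρ : ℤ) (hρ : 0 ≤ ρ)
    -- (ii) `ρ = dim W_d^r(X)`: every effective divisor of degree `r + ρ` on `X` is
    -- contained in an effective divisor of degree `d` and rank at least `r`
    (hdim : ∀ E, EffX E → degX E = r + ρ →
      ∃ D, EffX D ∧ degX D = d ∧ leX E D ∧ r ≤ rkX D)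
    -- (iii) every rational effective divisor on `Γ` is a specialization
    (RatDiv : Set Γ.toMetricGraph.Divisor)
    (hspec : ∀ E ∈ RatDiv, Γ.toMetricGraph.Effective E →
      ∃ EX, EffX EX ∧ τ EX = E)
    -- (iv) rational divisors are dense among effective divisors of a fixed degree …
    (hdense : ∀ (m : ℕ) (v : Fin m → Γ.X), ∃ vk : ℕ → Fin m → Γ.X,
      (∀ j, tupleDiv Γ m (vk j) ∈ RatDiv) ∧
      ∀ i, Filter.Tendsto (fun j => vk j i) Filter.atTop (nhds (v i)))
    -- … `Pic_d(Γ)` is compact and `W_d^r(Γ)` is closed: limits of effective divisors of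
    -- degree `d` and rank at least `r` containing `E_i → E` contain `E` and have rank ≥ r
    (hclosed : ∀ (m : ℕ) (vk : ℕ → Fin m → Γ.X) (v : Fin m → Γ.X),
      (∀ i, Filter.Tendsto (fun j => vk j i) Filter.atTop (nhds (v i))) →
      (∀ j, ∃ D, Γ.toMetricGraph.Effective D ∧ Γ.toMetricGraph.deg D = d ∧
        tupleDiv Γ m (vk j) ≤ D ∧ r ≤ Γ.wrank D) →
      ∃ D, Γ.toMetricGraph.Effective D ∧ Γ.toMetricGraph.deg D = d ∧
        tupleDiv Γ m v ≤ D ∧ r ≤ Γ.wrank D)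
    -- every effective divisor is given by a tuple of points
    (htuple : ∀ E : Γ.toMetricGraph.Divisor, Γ.toMetricGraph.Effective E →
      ∃ (m : ℕ) (v : Fin m → Γ.X), E = tupleDiv Γ m v) :
    ρ ≤ Γ.wBNrank d r :=
  specialization_BN_rank_general Γ DivX degX rkX EffX leX τ hτdeg hτrk hτeff hτle d r ρ hdim RatDiv
    hspec hdense hclosed htuple
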